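/- arXiv:2012.13652 — 3 statements merged into one kernel-verified Lean document; each statement's English description precedes it below -/
import Mathlib

section
/- Let L = H ∩ G be a lune on S^d with thickness Δ(L), and let c be the center of the bounding hemisphere G/H and c' the center of H/G. For any point x of G/H with x ≠ c: if Δ(L) < π/2 then dist(x, c') > dist(c, c'); if Δ(L) = π/2 then dist(x, c') = dist(c, c'); if Δ(L) > π/2 then dist(x, c') < dist(c, c'). -/
open Set Metric
open scoped RealInnerProductSpace

noncomputable section

/-- Euclidean space `E^{d+1}`. -/
abbrev E (d : ℕ) := EuclideanSpace ℝ (Fin (d + 1))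

/-- The unit sphere `S^d ⊆ E^{d+1}`. -/
def Sph (d : ℕ) : Set (E d) := Metric.sphere (0 : E d) 1

variable {d : ℕ}

/-- Geodesic (angular) distance on the unit sphere. -/
def sdist (x y : E d) : ℝ := Real.arccos ⟪x, y⟫

/-- Closed hemisphere with center `p`. -/
def Hemi (p : E d) : Set (E d) := {x ∈ Sph d | 0 ≤ ⟪p, x⟫}

/-- Open hemisphere with center `p`. -/
def openHemi (p : E d) : Set (E d) := {x ∈ Sph d | 0 < ⟪p, x⟫}

/-- Boundary great subsphere of the hemisphere with center `p`. -/
def bdHemi (p : E d) : Set (E d) := {x ∈ Sph d | ⟪p, x⟫ = 0}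

/-- Spherical convexity: no antipodal pairs, and the nonnegative cone over the
set is convex (equivalent to being closed under shorter arcs). -/
def SphConvex (C : Set (E d)) : Prop :=
  (∀ x ∈ C, -x ∉ C) ∧ Convex ℝ {v : E d | ∃ r : ℝ, 0 ≤ r ∧ ∃ x ∈ C, v = r • x}

/-- Spherical convex hull: the smallest spherically convex subset of the
sphere containing `A`. -/
def sConvHull (A : Set (E d)) : Set (E d) := ⋂₀ {C | SphConvex C ∧ C ⊆ Sph d ∧ A ⊆ C}

/-- Interior of `C` relative to the sphere. -/
def sInterior (C : Set (E d)) : Set (E d) :=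
  {x ∈ Sph d | ∃ ε > 0, Metric.ball x ε ∩ Sph d ⊆ C}

/-- A spherical convex body: closed, spherically convex, with nonempty
interior relative to the sphere. -/
def IsBody (C : Set (E d)) : Prop :=
  C ⊆ Sph d ∧ IsClosed C ∧ SphConvex C ∧ (sInterior C).Nonempty

/-- Spherical ball of radius `r` centered at `p`. -/
def sBall (p : E d) (r : ℝ) : Set (E d) := {x ∈ Sph d | sdist p x ≤ r}

/-- Normalization of a vector. -/
def nrm (v : E d) : E d := ‖v‖⁻¹ • v

/-- The center of the `(d-1)`-dimensional hemisphere `bd(G) ∩ H`, where `G`, `H`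
are the hemispheres centered at `g`, `h`. -/
def cGH (g h : E d) : E d := nrm (h - ⟪g, h⟫ • g)

/-- Thickness of the lune `Hemi g ∩ Hemi h`: the geodesic distance between the
centers of its two bounding `(d-1)`-dimensional hemispheres. -/
def lthick (g h : E d) : ℝ := Real.pi - sdist g h

/-- The hemisphere centered at `k` supports `C`. -/
def Supports (k : E d) (C : Set (E d)) : Prop :=
  C ⊆ Hemi k ∧ (bdHemi k ∩ C).Nonempty

/-- Width of `C` determined by a supporting hemisphere centered at `k`:
minimal thickness of a lune `K ∩ K*` over supporting hemispheres `K* ≠ K`. -/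
def width (C : Set (E d)) (k : E d) : ℝ :=
  sInf {w | ∃ k' ∈ Sph d, k' ≠ k ∧ k' ≠ -k ∧ Supports k' C ∧ w = lthick k k'}

/-- Thickness of `C`: minimal thickness of a lune containing `C`. -/
def thick (C : Set (E d)) : ℝ :=
  sInf {w | ∃ g ∈ Sph d, ∃ h ∈ Sph d, g ≠ h ∧ g ≠ -h ∧
    C ⊆ Hemi g ∩ Hemi h ∧ w = lthick g h}

/-- Spherical diameter of a set. -/
def sdiam (C : Set (E d)) : ℝ := sSup {r | ∃ x ∈ C, ∃ y ∈ C, r = sdist x y}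

/-- Reduced spherical convex body. -/
def Reduced (R : Set (E d)) : Prop :=
  IsBody R ∧ ∀ Z : Set (E d), IsBody Z → Z ⊆ R → Z ≠ R → thick Z < thick R

/-- Extreme point of a spherical convex body. -/
def ExtremePt (C : Set (E d)) (e : E d) : Prop := e ∈ C ∧ SphConvex (C \ {e})

/-!
Put `t = ⟪g, h⟫`. For unit vectors `g`, `h` the vectors `h - t • g` and `g - t • h` have the same
length, and on the great sphere `⟪g, x⟫ = 0` their inner products with `x` differ by the factor `-t`.
Hence `⟪x, c'⟫ = s * ⟪c, c'⟫` with `s = ⟪x, c⟫ ∈ [0, 1)` for `x ≠ c`, while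
`Δ(L) = arccos ⟪c, c'⟫`. Shrinking the argument of `arccos` towards `0` moves the angle towards
`π / 2`, which gives the three cases according to the sign of `⟪c, c'⟫ = -t`.
-/

theorem norm_sub_inner_smul_sq {F : Type*} [NormedAddCommGroup F] [InnerProductSpace ℝ F]
    {g : F} (hg : ‖g‖ = 1) (h : F) :
    ‖h - ⟪g, h⟫ • g‖ ^ 2 = ‖h‖ ^ 2 - ⟪g, h⟫ ^ 2 := by
  rw [norm_sub_sq_real, real_inner_smul_right, norm_smul, hg, Real.norm_eq_abs, real_inner_comm]
  simp only [mul_one, sq_abs]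
  ring

theorem Real.arccos_lt_arccos_mul {y s : ℝ} (hy : y ≤ 1) (hs₀ : 0 ≤ s) (hs₁ : s < 1)
    (h : arccos y < Real.pi / 2) : arccos y < arccos (s * y) := by
  have hy₀ : 0 < y := arccos_lt_pi_div_two.1 h
  exact arccos_lt_arccos (by nlinarith) (by nlinarith) hy

theorem Real.arccos_mul_lt_arccos {y s : ℝ} (hy : -1 ≤ y) (hs₀ : 0 ≤ s) (hs₁ : s < 1)
    (h : Real.pi / 2 < arccos y) : arccos (s * y) < arccos y := by
  have hy₀ : y < 0 := by
    by_contra! hy₀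
    exact h.not_ge (arccos_le_pi_div_two.2 hy₀)
  exact arccos_lt_arccos hy (by nlinarith) (by nlinarith)

theorem Real.arccos_mul_of_arccos_eq_pi_div_two {y : ℝ} (s : ℝ) (h : arccos y = Real.pi / 2) :
    arccos (s * y) = arccos y := by
  rw [arccos_eq_pi_div_two.1 h, mul_zero]

section Lune

variable {d : ℕ} {g h : E d}

theorem norm_cGH (hg : ‖g‖ = 1) (hh : ‖h‖ = 1) (hne : g ≠ h) (hno : g ≠ -h) :
    ‖cGH g h‖ = 1 := by
  refine norm_smul_inv_norm fun h₀ => ?_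
  have ht : ⟪g, h⟫ ^ 2 = 1 := by
    have := norm_sub_inner_smul_sq hg h
    rw [h₀, hh, norm_zero] at this
    linarith
  rcases sq_eq_one_iff.1 ht with ht | ht
  · exact hne ((inner_eq_one_iff_of_norm_eq_one hg hh).1 ht)
  · exact hno ((inner_eq_neg_one_iff_of_norm_eq_one hg hh).1 ht)

theorem inner_cGH_self (hg : ‖g‖ = 1) (h : E d) : ⟪g, cGH g h⟫ = 0 := by
  rw [cGH, nrm, real_inner_smul_right, inner_sub_right, real_inner_smul_right,
    real_inner_self_eq_norm_sq, hg]
  ring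

theorem inner_cGH_nonneg {x : E d} (hgx : ⟪g, x⟫ = 0) (hhx : 0 ≤ ⟪h, x⟫) :
    0 ≤ ⟪x, cGH g h⟫ := by
  rw [cGH, nrm, real_inner_smul_right, inner_sub_right, real_inner_smul_right,
    real_inner_comm g x, hgx, real_inner_comm h x, mul_zero, sub_zero]
  exact mul_nonneg (inv_nonneg.2 (norm_nonneg _)) hhx

theorem inner_cGH_swap (hg : ‖g‖ = 1) (hh : ‖h‖ = 1) {x : E d} (hgx : ⟪g, x⟫ = 0) :
    ⟪x, cGH h g⟫ = -⟪g, h⟫ * ⟪x, cGH g h⟫ := by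
  have hnorm : ‖g - ⟪h, g⟫ • h‖ = ‖h - ⟪g, h⟫ • g‖ := by
    rw [← sq_eq_sq₀ (norm_nonneg _) (norm_nonneg _), norm_sub_inner_smul_sq hh,
      norm_sub_inner_smul_sq hg, hg, hh, real_inner_comm]
  rw [cGH, cGH, nrm, nrm, hnorm, real_inner_smul_right, real_inner_smul_right, inner_sub_right,
    inner_sub_right, real_inner_smul_right, real_inner_smul_right, real_inner_comm g x, hgx,
    real_inner_comm h g]
  ring

theorem inner_cGH_cGH (hg : ‖g‖ = 1) (hh : ‖h‖ = 1) (hne : g ≠ h) (hno : g ≠ -h) :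
    ⟪cGH g h, cGH h g⟫ = -⟪g, h⟫ := by
  rw [inner_cGH_swap hg hh (inner_cGH_self hg h),
    inner_self_eq_one_of_norm_eq_one (norm_cGH hg hh hne hno), mul_one]

theorem lthick_eq_sdist_cGH (hg : ‖g‖ = 1) (hh : ‖h‖ = 1) (hne : g ≠ h) (hno : g ≠ -h) :
    lthick g h = sdist (cGH g h) (cGH h g) := by
  rw [lthick, sdist, sdist, inner_cGH_cGH hg hh hne hno, Real.arccos_neg]

end Lune

/-- comparison of distances from points of a bounding hemisphere
of a lune to the center of the other bounding hemisphere, according to the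
thickness of the lune. -/
theorem stmt4 {d : ℕ} (g h : E d) (hg : g ∈ Sph d) (hh : h ∈ Sph d)
    (hne : g ≠ h) (hno : g ≠ -h)
    (x : E d) (hx : x ∈ bdHemi g ∩ Hemi h) (hxc : x ≠ cGH g h) :
    (lthick g h < Real.pi / 2 →
        sdist x (cGH h g) > sdist (cGH g h) (cGH h g)) ∧
    (lthick g h = Real.pi / 2 →
        sdist x (cGH h g) = sdist (cGH g h) (cGH h g)) ∧
    (lthick g h > Real.pi / 2 →
        sdist x (cGH h g) < sdist (cGH g h) (cGH h g)) := by
  obtain ⟨⟨hxS, hgx⟩, -, hhx⟩ := hx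
  simp only [Sph, mem_sphere_zero_iff_norm] at hg hh hxS
  have hc := norm_cGH hg hh hne hno
  have hs₀ : 0 ≤ ⟪x, cGH g h⟫ := inner_cGH_nonneg hgx hhx
  have hs₁ : ⟪x, cGH g h⟫ < 1 := (inner_lt_one_iff_real_of_norm_eq_one hxS hc).2 hxc
  have hy := real_inner_mem_Icc_of_norm_eq_one hc
    (norm_cGH hh hg hne.symm fun e => hno (by rw [e, neg_neg]))
  have hdist : sdist x (cGH h g) = Real.arccos (⟪x, cGH g h⟫ * ⟪cGH g h, cGH h g⟫) := by
    rw [sdist, inner_cGH_swap hg hh hgx, inner_cGH_cGH hg hh hne hno, mul_comm]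
  rw [hdist, lthick_eq_sdist_cGH hg hh hne hno, sdist]
  exact ⟨Real.arccos_lt_arccos_mul hy.2 hs₀ hs₁, Real.arccos_mul_of_arccos_eq_pi_div_two _,
    Real.arccos_mul_lt_arccos hy.1 hs₀ hs₁⟩
end
end

section
/- Let K be a hemisphere of S^d with center k supporting a convex body C ⊂ S^d. If k ∉ C, then width_K(C) = π/2 − ρ, where ρ is the radius of the largest ball centered at k disjoint from the interior of C; if k ∈ bd(C), then width_K(C) = π/2; if k ∈ int(C), then width_K(C) = π/2 + ρ, where ρ is the radius of the largest ball centered at k contained in C. -/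
open Set Metric
open scoped RealInnerProductSpace

noncomputable section

variable {d : ℕ}

/-!
Let `ρ` be the distance from `k` to `C` when `k ∉ C`, attained at `p ∈ C`, and the distance from
`k` to the complement of `int C` when `k ∈ int C`, attained at `q ∈ bd C`. A hemisphere `K*`
supporting `C` contains `p`, so by the spherical triangle inequality its centre is within
`π/2 + ρ` of `k`; in the interior case `K*` contains the ball of radius `ρ` about `k`, which forces
its centre within `π/2 - ρ` of `k`. The lower bounds `π/2 - ρ`, `π/2 + ρ` for the thickness follow,
and they are attained: at `p` by the hemisphere whose boundary meets the arc `kp` orthogonally at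
`p`, which supports `C` because `(cos ρ) p` is the nearest point to `k` of the cone over `C`; at `q`
(and at `k` itself when `k ∈ bd C`) by any hemisphere supporting `C` there, which exists by
Hahn–Banach.
-/

open Filter Topology Pointwise

namespace Sph

lemma mem_iff {x : E d} : x ∈ Sph d ↔ ‖x‖ = 1 := by
  simp [Sph]

lemma isClosed : IsClosed (Sph d) := Metric.isClosed_sphere

end Sph

section SphericalDistance

lemma sdist_nonneg (x y : E d) : 0 ≤ sdist x y := Real.arccos_nonneg _

lemma sdist_le_pi (x y : E d) : sdist x y ≤ Real.pi := Real.arccos_le_pi _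

lemma sdist_comm (x y : E d) : sdist x y = sdist y x := by
  rw [sdist, sdist, real_inner_comm]

lemma continuous_sdist (x : E d) : Continuous (sdist x) :=
  Real.continuous_arccos.comp (continuous_const.inner continuous_id)

lemma sdist_neg_right (x y : E d) : sdist x (-y) = Real.pi - sdist x y := by
  rw [sdist, sdist, inner_neg_right, Real.arccos_neg]

variable {x y z : E d}

lemma cos_sdist (hx : ‖x‖ = 1) (hy : ‖y‖ = 1) : Real.cos (sdist x y) = ⟪x, y⟫ :=
  Real.cos_arccos (neg_one_le_real_inner_of_norm_eq_one hx hy)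
    (real_inner_le_one_of_norm_eq_one hx hy)

lemma sdist_self (hx : ‖x‖ = 1) : sdist x x = 0 := by
  rw [sdist, inner_self_eq_one_of_norm_eq_one hx, Real.arccos_one]

lemma eq_of_sdist_eq_zero (hx : ‖x‖ = 1) (hy : ‖y‖ = 1) (h : sdist x y = 0) : x = y := by
  have h1 : ⟪x, y⟫ = 1 := by rw [← cos_sdist hx hy, h, Real.cos_zero]
  exact (inner_eq_one_iff_of_norm_eq_one hx hy).mp h1

lemma sdist_eq_angle (hx : ‖x‖ = 1) (hy : ‖y‖ = 1) :
    sdist x y = InnerProductGeometry.angle x y := by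
  rw [sdist, InnerProductGeometry.angle, hx, hy, mul_one, div_one]

lemma sdist_triangle (hx : ‖x‖ = 1) (hy : ‖y‖ = 1) (hz : ‖z‖ = 1) :
    sdist x z ≤ sdist x y + sdist y z := by
  simpa only [sdist_eq_angle, hx, hy, hz] using
    InnerProductGeometry.angle_le_angle_add_angle x y z

lemma sdist_le_iff (hx : ‖x‖ = 1) (hy : ‖y‖ = 1) {r : ℝ} (hr0 : 0 ≤ r) (hrπ : r ≤ Real.pi) :
    sdist x y ≤ r ↔ Real.cos r ≤ ⟪x, y⟫ := by
  rw [← cos_sdist hx hy]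
  exact (Real.strictAntiOn_cos.le_iff_ge ⟨hr0, hrπ⟩ ⟨sdist_nonneg x y, sdist_le_pi x y⟩).symm

lemma sdist_lt_iff (hx : ‖x‖ = 1) (hy : ‖y‖ = 1) {r : ℝ} (hr0 : 0 ≤ r) (hrπ : r ≤ Real.pi) :
    sdist x y < r ↔ Real.cos r < ⟪x, y⟫ := by
  rw [← cos_sdist hx hy]
  exact (Real.strictAntiOn_cos.lt_iff_gt ⟨hr0, hrπ⟩ ⟨sdist_nonneg x y, sdist_le_pi x y⟩).symm

lemma mem_Hemi_iff (hx : ‖x‖ = 1) : x ∈ Hemi y ↔ sdist y x ≤ Real.pi / 2 := by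
  rw [sdist, Real.arccos_le_pi_div_two]
  exact and_iff_right (Sph.mem_iff.mpr hx)

lemma sdist_of_mem_bdHemi (hx : x ∈ bdHemi y) : sdist y x = Real.pi / 2 := by
  rw [sdist, hx.2, Real.arccos_zero]

end SphericalDistance

section Normalize

variable {v : E d}

lemma norm_nrm (hv : v ≠ 0) : ‖nrm v‖ = 1 := by
  rw [nrm, norm_smul, norm_inv, norm_norm, inv_mul_cancel₀ (norm_ne_zero_iff.mpr hv)]

lemma nrm_of_norm_eq_one (hv : ‖v‖ = 1) : nrm v = v := by
  rw [nrm, hv, inv_one, one_smul]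

lemma norm_smul_nrm (hv : v ≠ 0) : ‖v‖ • nrm v = v := by
  rw [nrm, smul_smul, mul_inv_cancel₀ (norm_ne_zero_iff.mpr hv), one_smul]

lemma continuousAt_nrm (hv : v ≠ 0) : ContinuousAt nrm v :=
  (continuous_norm.continuousAt.inv₀ (norm_ne_zero_iff.mpr hv)).smul continuousAt_id

lemma inner_le_inner_nrm {k : E d} (hv : ‖v‖ ≤ 1) (hkv : 0 < ⟪k, v⟫) : ⟪k, v⟫ ≤ ⟪k, nrm v⟫ := by
  have hv0 : 0 < ‖v‖ := norm_pos_iff.mpr (by rintro rfl; simp at hkv)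
  rw [nrm, real_inner_smul_right]
  exact le_mul_of_one_le_left hkv.le (one_le_inv₀ hv0 |>.mpr hv)

lemma tendsto_nrm_segment (hv : ‖v‖ = 1) (w : E d) :
    Tendsto (fun t : ℝ => nrm ((1 - t) • v + t • w)) (𝓝 0) (𝓝 v) := by
  have hv0 : v ≠ 0 := by rintro rfl; simp at hv
  have h : ContinuousAt (nrm ∘ fun t : ℝ => (1 - t) • v + t • w) 0 :=
    ContinuousAt.comp_of_eq (continuousAt_nrm hv0) (by fun_prop) (by simp)
  rw [ContinuousAt, Function.comp_apply, sub_zero, one_smul, zero_smul, add_zero,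
    nrm_of_norm_eq_one hv] at h
  exact h

end Normalize

def sCone (C : Set (E d)) : Set (E d) := {v | ∃ r : ℝ, 0 ≤ r ∧ ∃ x ∈ C, v = r • x}

section Cone

variable {C : Set (E d)}

lemma SphConvex.convex_sCone (h : SphConvex C) : Convex ℝ (sCone C) := h.2

lemma subset_sCone : C ⊆ sCone C := fun x hx => ⟨1, zero_le_one, x, hx, (one_smul ℝ x).symm⟩

lemma smul_mem_sCone {v : E d} (hv : v ∈ sCone C) {t : ℝ} (ht : 0 ≤ t) : t • v ∈ sCone C := by
  obtain ⟨r, hr, x, hx, rfl⟩ := hv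
  exact ⟨t * r, mul_nonneg ht hr, x, hx, smul_smul t r x⟩

lemma eq_norm_smul_of_mem_sCone (hC : C ⊆ Sph d) {v : E d} (hv : v ∈ sCone C) :
    ∃ c ∈ C, v = ‖v‖ • c := by
  obtain ⟨r, hr, x, hx, rfl⟩ := hv
  refine ⟨x, hx, ?_⟩
  rw [norm_smul, Sph.mem_iff.mp (hC hx), Real.norm_of_nonneg hr, mul_one]

lemma smul_mem_interior_sCone {v : E d} (hv : v ∈ interior (sCone C)) {t : ℝ} (ht : 0 < t) :
    t • v ∈ interior (sCone C) := by
  have hsub : t • sCone C ⊆ sCone C := by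
    rintro _ ⟨w, hw, rfl⟩
    exact smul_mem_sCone hw ht.le
  apply interior_mono hsub
  rw [interior_smul₀ ht.ne']
  exact smul_mem_smul_set hv

lemma sInterior_eq (hC : C ⊆ Sph d) : sInterior C = Sph d ∩ interior (sCone C) := by
  ext x
  refine ⟨fun ⟨hx, ε, hε, hball⟩ => ⟨hx, ?_⟩, fun ⟨hx, hint⟩ => ⟨hx, ?_⟩⟩
  · have hx0 : x ≠ 0 := by rintro rfl; simp [Sph.mem_iff] at hx
    have hnrm : nrm ⁻¹' ball x ε ∈ 𝓝 x := by
      apply continuousAt_nrm hx0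
      rw [nrm_of_norm_eq_one (Sph.mem_iff.mp hx)]
      exact ball_mem_nhds x hε
    rw [mem_interior_iff_mem_nhds]
    filter_upwards [hnrm, isOpen_ne.mem_nhds hx0] with y hy hy0
    rw [← norm_smul_nrm hy0]
    exact smul_mem_sCone (subset_sCone (hball ⟨hy, Sph.mem_iff.mpr (norm_nrm hy0)⟩))
      (norm_nonneg y)
  · obtain ⟨ε, hε, hball⟩ := Metric.mem_nhds_iff.mp (mem_interior_iff_mem_nhds.mp hint)
    refine ⟨ε, hε, fun y ⟨hy, hyS⟩ => ?_⟩
    obtain ⟨c, hc, hyc⟩ := eq_norm_smul_of_mem_sCone hC (hball hy)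
    rwa [hyc, Sph.mem_iff.mp hyS, one_smul]

lemma sInterior_subset : sInterior C ⊆ C := fun _ ⟨hx, _, hε, hball⟩ =>
  hball ⟨mem_ball_self hε, hx⟩

lemma zero_notMem_interior_sCone (hC : C ⊆ Sph d) (hconv : SphConvex C) (hne : C.Nonempty) :
    (0 : E d) ∉ interior (sCone C) := by
  intro h0
  obtain ⟨p, hp⟩ := hne
  obtain ⟨ε, hε, hball⟩ := Metric.mem_nhds_iff.mp (mem_interior_iff_mem_nhds.mp h0)
  have hp1 : ‖p‖ = 1 := Sph.mem_iff.mp (hC hp)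
  have hw : -((ε / 2) • p) ∈ sCone C := by
    apply hball
    rw [mem_ball_zero_iff, norm_neg, norm_smul, hp1, Real.norm_of_nonneg (by positivity)]
    linarith
  obtain ⟨c, hc, hwc⟩ := eq_norm_smul_of_mem_sCone hC hw
  rw [norm_neg, norm_smul, hp1, Real.norm_of_nonneg (by positivity), mul_one, ← smul_neg] at hwc
  rw [← smul_right_injective _ (by positivity : ε / 2 ≠ 0) hwc] at hc
  exact hconv.1 p hp hc

end Cone

section Body

variable {C : Set (E d)}

lemma IsBody.isCompact (hC : IsBody C) : IsCompact C :=
  (isCompact_sphere (0 : E d) 1).of_isClosed_subset hC.2.1 hC.1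

lemma isClosed_sph_diff_sInterior (hC : C ⊆ Sph d) : IsClosed (Sph d \ sInterior C) := by
  rw [sInterior_eq hC, sdiff_self_inter]
  exact Sph.isClosed.sdiff isOpen_interior

lemma IsBody.nrm_segment_mem_sInterior (hC : IsBody C) {p z : E d} (hp : p ∈ C)
    (hz : z ∈ sInterior C) {t : ℝ} (ht0 : 0 < t) (ht1 : t ≤ 1) :
    nrm ((1 - t) • p + t • z) ∈ sInterior C := by
  obtain ⟨hsub, -, hconv, -⟩ := hC
  rw [sInterior_eq hsub] at hz ⊢
  have hv : (1 - t) • p + t • z ∈ interior (sCone C) :=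
    hconv.convex_sCone.combo_self_interior_mem_interior (subset_sCone hp) hz.2
      (by linarith) ht0 (by ring)
  have hv0 : (1 - t) • p + t • z ≠ 0 := fun h =>
    zero_notMem_interior_sCone hsub hconv ⟨p, hp⟩ (h ▸ hv)
  exact ⟨Sph.mem_iff.mpr (norm_nrm hv0),
    smul_mem_interior_sCone hv (inv_pos.mpr (norm_pos_iff.mpr hv0))⟩

lemma exists_inner_gt_of_mem_sInterior (hC : C ⊆ Sph d) {k x : E d} (hk : ‖k‖ = 1)
    (hx : x ∈ sInterior C) (h0 : 0 ≤ ⟪k, x⟫) (h1 : ⟪k, x⟫ < 1) :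
    ∃ y ∈ C, ⟪k, x⟫ < ⟪k, y⟫ := by
  rw [sInterior_eq hC] at hx
  obtain ⟨ε, hε, hball⟩ := Metric.mem_nhds_iff.mp (mem_interior_iff_mem_nhds.mp hx.2)
  have hδ : 0 < ε / 2 := half_pos hε
  have hv : x + (ε / 2) • k ∈ sCone C := hball (by
    rw [mem_ball, dist_eq_norm, add_sub_cancel_left, norm_smul, hk,
      Real.norm_of_nonneg hδ.le]
    linarith)
  obtain ⟨y, hy, hxy⟩ := eq_norm_smul_of_mem_sCone hC hv
  refine ⟨y, hy, ?_⟩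
  have hnorm : ‖x + (ε / 2) • k‖ ≤ 1 + ε / 2 := by
    refine (norm_add_le _ _).trans_eq ?_
    rw [norm_smul, hk, Sph.mem_iff.mp hx.1, Real.norm_of_nonneg hδ.le, mul_one]
  have hinner : ⟪k, x⟫ + ε / 2 = ‖x + (ε / 2) • k‖ * ⟪k, y⟫ := by
    rw [← real_inner_smul_right, ← hxy, inner_add_right, real_inner_smul_right,
      inner_self_eq_one_of_norm_eq_one hk, mul_one]
  by_contra! hle
  nlinarith [mul_le_mul_of_nonneg_left hle (norm_nonneg (x + (ε / 2) • k)),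
    mul_le_mul_of_nonneg_left hnorm h0]

lemma sInterior_subset_openHemi (hC : C ⊆ Sph d) {k : E d} (hk : ‖k‖ = 1)
    (hCk : C ⊆ Hemi k) : sInterior C ⊆ openHemi k := by
  intro x hx
  refine ⟨hx.1, lt_of_le_of_ne (hCk (sInterior_subset hx)).2 fun h => ?_⟩
  obtain ⟨y, hy, hxy⟩ := exists_inner_gt_of_mem_sInterior hC (k := -k) (by rwa [norm_neg]) hx
    (by rw [inner_neg_left, ← h, neg_zero]) (by rw [inner_neg_left, ← h]; norm_num)
  rw [inner_neg_left, inner_neg_left, ← h] at hxy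
  linarith [(hCk hy).2]

lemma IsBody.exists_supports_of_notMem_sInterior (hC : IsBody C) {q : E d} (hq : q ∈ C)
    (hqi : q ∉ sInterior C) : ∃ k ∈ Sph d, q ∈ bdHemi k ∧ C ⊆ Hemi k := by
  obtain ⟨hsub, -, hconv, hint⟩ := hC
  have hcvx := hconv.convex_sCone
  rw [sInterior_eq hsub] at hint hqi
  obtain ⟨f, hf⟩ := geometric_hahn_banach_open_point hcvx.interior isOpen_interior
    fun h => hqi ⟨hsub hq, h⟩
  have hle : ∀ v ∈ sCone C, f v ≤ f q := by
    intro v hv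
    have hcl : closure (interior (sCone C)) ⊆ {v | f v ≤ f q} :=
      closure_minimal (fun a ha => (hf a ha).le) (isClosed_le f.continuous continuous_const)
    rw [hcvx.closure_interior_eq_closure_of_nonempty_interior ⟨_, hint.some_mem.2⟩] at hcl
    exact hcl (subset_closure hv)
  have hfq : f q = 0 := by
    have h2 := hle _ (smul_mem_sCone (subset_sCone hq) zero_le_two)
    have h0 := hle _ (smul_mem_sCone (subset_sCone hq) le_rfl)
    simp only [map_smul, smul_eq_mul, zero_smul, map_zero] at h2 h0
    linarith
  set w := (InnerProductSpace.toDual ℝ (E d)).symm f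
  have hw : ∀ x, ⟪w, x⟫ = f x := fun x => InnerProductSpace.toDual_symm_apply
  have hw0 : w ≠ 0 := by
    intro h
    have := hf _ hint.some_mem.2
    rw [← hw, ← hw, h, inner_zero_left, inner_zero_left] at this
    exact lt_irrefl _ this
  have hk : ∀ x, ⟪-nrm w, x⟫ = -(‖w‖⁻¹ * f x) := fun x => by
    rw [inner_neg_left, nrm, real_inner_smul_left, hw]
  refine ⟨-nrm w, Sph.mem_iff.mpr (by rw [norm_neg, norm_nrm hw0]), ⟨hsub hq, ?_⟩, ?_⟩
  · rw [hk, hfq, mul_zero, neg_zero]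
  · intro x hx
    refine ⟨hsub hx, ?_⟩
    rw [hk, neg_nonneg]
    exact mul_nonpos_of_nonneg_of_nonpos (by positivity) (hfq ▸ hle x (subset_sCone hx))

lemma inner_le_mul_inner_of_isMaxOn (hC : C ⊆ Sph d) (hconv : SphConvex C) {k p : E d}
    (hp : p ∈ C) (hmax : IsMaxOn (fun x => ⟪k, x⟫) C p) (h0 : 0 ≤ ⟪k, p⟫) {x : E d}
    (hx : x ∈ C) : ⟪k, x⟫ ≤ ⟪k, p⟫ * ⟪p, x⟫ := by
  set m := ⟪k, p⟫
  have hp1 := Sph.mem_iff.mp (hC hp)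
  have hmp : m • p ∈ sCone C := smul_mem_sCone (subset_sCone hp) h0
  have hproj : ‖k - m • p‖ = ⨅ w : sCone C, ‖k - w‖ := by
    have : Nonempty (sCone C) := ⟨⟨_, hmp⟩⟩
    have hlow : ∀ w ∈ sCone C, ‖k - m • p‖ ≤ ‖k - w‖ := by
      rintro _ ⟨r, hr, c, hc, rfl⟩
      have hkc : ⟪k, c⟫ ≤ m := hmax hc
      rw [← sq_le_sq₀ (norm_nonneg _) (norm_nonneg _), norm_sub_sq_real, norm_sub_sq_real,
        real_inner_smul_right, real_inner_smul_right, norm_smul, norm_smul, hp1,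
        Sph.mem_iff.mp (hC hc), Real.norm_of_nonneg hr, Real.norm_of_nonneg h0]
      nlinarith [sq_nonneg (r - m), mul_le_mul_of_nonneg_left hkc hr]
    refine le_antisymm (le_ciInf fun w => hlow w w.2) ?_
    exact ciInf_le (f := fun w : sCone C => ‖k - (w : E d)‖)
      ⟨0, by rintro _ ⟨w, rfl⟩; exact norm_nonneg _⟩ ⟨m • p, hmp⟩
  have h := (norm_eq_iInf_iff_real_inner_le_zero hconv.convex_sCone hmp).mp hproj x
    (subset_sCone hx)
  rw [inner_sub_left, inner_sub_right, inner_sub_right, real_inner_smul_left,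
    real_inner_smul_left, real_inner_smul_right, real_inner_smul_right,
    inner_self_eq_one_of_norm_eq_one hp1] at h
  linarith

lemma sBall_subset_of_forall_sdist_lt (hcl : IsClosed C) {k : E d} (hk : ‖k‖ = 1) {ρ : ℝ}
    (hρ0 : 0 < ρ) (hρ : ρ ≤ Real.pi / 2) (h : ∀ y ∈ Sph d, sdist k y < ρ → y ∈ C) :
    sBall k ρ ⊆ C := by
  rintro x ⟨hxS, hxρ⟩
  have hx1 := Sph.mem_iff.mp hxS
  have hρπ : ρ ≤ Real.pi := by linarith [Real.pi_pos]
  have hcos0 : 0 ≤ Real.cos ρ := Real.cos_nonneg_of_neg_pi_div_two_le_of_le (by linarith) hρ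
  have hcos1 : Real.cos ρ < 1 := by
    rw [← Real.cos_zero]
    exact Real.cos_lt_cos_of_nonneg_of_le_pi le_rfl hρπ hρ0
  have hkx : Real.cos ρ ≤ ⟪k, x⟫ := (sdist_le_iff hk hx1 hρ0.le hρπ).mp hxρ
  have hmem : ∀ t ∈ Ioo (0 : ℝ) 1, nrm ((1 - t) • x + t • k) ∈ C := by
    rintro t ⟨ht0, ht1⟩
    have hkv : Real.cos ρ < ⟪k, (1 - t) • x + t • k⟫ := by
      rw [inner_add_right, real_inner_smul_right, real_inner_smul_right,
        inner_self_eq_one_of_norm_eq_one hk]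
      nlinarith
    have hnv : ‖(1 - t) • x + t • k‖ ≤ 1 := by
      refine (norm_add_le _ _).trans_eq ?_
      rw [norm_smul, norm_smul, hx1, hk, Real.norm_of_nonneg (by linarith),
        Real.norm_of_nonneg ht0.le]
      ring
    have hv0 : (1 - t) • x + t • k ≠ 0 := by
      intro h0
      rw [h0, inner_zero_right] at hkv
      linarith
    apply h _ (Sph.mem_iff.mpr (norm_nrm hv0))
    rw [sdist_lt_iff hk (norm_nrm hv0) hρ0.le hρπ]
    exact hkv.trans_le (inner_le_inner_nrm hnv (hcos0.trans_lt hkv))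
  exact hcl.mem_of_tendsto ((tendsto_nrm_segment hx1 k).mono_left nhdsWithin_le_nhds)
    (mem_of_superset (Ioo_mem_nhdsGT zero_lt_one) hmem)

end Body

section Width

variable {C : Set (E d)} {k k' : E d}

lemma width_eq_of_forall_le {w : ℝ} (hk'S : k' ∈ Sph d) (hne : k' ≠ k) (hne' : k' ≠ -k)
    (hsup : Supports k' C) (hk'w : lthick k k' ≤ w)
    (hle : ∀ k'' ∈ Sph d, k'' ≠ k → k'' ≠ -k → Supports k'' C → w ≤ lthick k k'') :
    width C k = w := by
  refine IsLeast.csInf_eq ⟨⟨k', hk'S, hne, hne', hsup,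
    le_antisymm (hle k' hk'S hne hne' hsup) hk'w⟩, ?_⟩
  rintro _ ⟨k'', h1, h2, h3, h4, rfl⟩
  exact hle k'' h1 h2 h3 h4

lemma ne_and_ne_neg_of_lthick_mem_Ioo (hk : ‖k‖ = 1) (h : lthick k k' ∈ Ioo 0 Real.pi) :
    k' ≠ k ∧ k' ≠ -k := by
  constructor <;> rintro rfl
  · simp [lthick, sdist_self hk] at h
  · simp [lthick, sdist_neg_right, sdist_self hk] at h

lemma pi_div_two_sub_sdist_le_lthick (hk : ‖k‖ = 1) (hk' : ‖k'‖ = 1) {p : E d}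
    (hp : ‖p‖ = 1) (hpk' : p ∈ Hemi k') : Real.pi / 2 - sdist k p ≤ lthick k k' := by
  have h1 := sdist_triangle hk hp hk'
  have h2 := (mem_Hemi_iff hp).mp hpk'
  rw [sdist_comm p k'] at h1
  rw [lthick]
  linarith

lemma lthick_le_of_mem_bdHemi (hk : ‖k‖ = 1) (hk' : ‖k'‖ = 1) {q : E d}
    (hq : q ∈ bdHemi k') : lthick k k' ≤ Real.pi / 2 + sdist k q := by
  have := sdist_triangle (Sph.mem_iff.mp hq.1) hk hk'
  rw [sdist_comm q k', sdist_of_mem_bdHemi hq, sdist_comm q k] at this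
  rw [lthick]
  linarith

lemma exists_eq_cos_smul_add_sin_smul (hk : ‖k‖ = 1) (hk' : ‖k'‖ = 1) (hne : k' ≠ k)
    (hne' : k' ≠ -k) : ∃ u : E d, ‖u‖ = 1 ∧ ⟪k, u⟫ = 0 ∧
      k' = Real.cos (sdist k k') • k + Real.sin (sdist k k') • u := by
  set t := ⟪k, k'⟫
  have hsin : Real.sin (sdist k k') = √(1 - t ^ 2) := Real.sin_arccos t
  have hw2 : ‖k' - t • k‖ ^ 2 = 1 - t ^ 2 := by
    rw [norm_sub_sq_real, real_inner_smul_right, norm_smul, hk, hk', real_inner_comm,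
      Real.norm_eq_abs, mul_one, sq_abs]
    ring
  have hw0 : k' - t • k ≠ 0 := by
    intro h
    have hk't : k' = t • k := sub_eq_zero.mp h
    have ht : |t| = 1 := by simpa [hk't, norm_smul, hk] using hk'
    rcases (abs_eq zero_le_one).mp ht with h1 | h1
    exacts [hne (by rw [hk't, h1, one_smul]), hne' (by rw [hk't, h1, neg_one_smul])]
  refine ⟨nrm (k' - t • k), norm_nrm hw0, ?_, ?_⟩
  · rw [nrm, real_inner_smul_right, inner_sub_right, real_inner_smul_right,
      inner_self_eq_one_of_norm_eq_one hk, mul_one, sub_self, mul_zero]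
  · rw [cos_sdist hk hk', hsin, ← hw2, Real.sqrt_sq (norm_nonneg _), norm_smul_nrm hw0,
      add_sub_cancel]

lemma sdist_add_le_of_sBall_subset_Hemi (hk : ‖k‖ = 1) (hk' : ‖k'‖ = 1) (hne : k' ≠ k)
    (hne' : k' ≠ -k) {ρ : ℝ} (hρ0 : 0 ≤ ρ) (hρ : ρ ≤ Real.pi / 2) (h : sBall k ρ ⊆ Hemi k') :
    sdist k k' + ρ ≤ Real.pi / 2 := by
  obtain ⟨u, hu, hku, hk'eq⟩ := exists_eq_cos_smul_add_sin_smul hk hk' hne hne'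
  set α := sdist k k'
  -- the point of `sBall k ρ` farthest from `k'`, on the great circle through `k` and `k'`
  set x := Real.cos ρ • k - Real.sin ρ • u
  have hkk : ⟪k, k⟫ = 1 := inner_self_eq_one_of_norm_eq_one hk
  have huu : ⟪u, u⟫ = 1 := inner_self_eq_one_of_norm_eq_one hu
  have huk : ⟪u, k⟫ = 0 := (real_inner_comm k u).trans hku
  have hx : ‖x‖ = 1 := by
    rw [← pow_eq_one_iff_of_nonneg (norm_nonneg x) two_ne_zero, ← real_inner_self_eq_norm_sq]
    simp only [x, inner_sub_left, inner_sub_right, real_inner_smul_left,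
      real_inner_smul_right, hkk, huu, hku, huk]
    linear_combination Real.cos_sq_add_sin_sq ρ
  have hkx : ⟪k, x⟫ = Real.cos ρ := by
    simp only [x, inner_sub_right, real_inner_smul_right, hkk, hku]
    ring
  have hxk' : ⟪k', x⟫ = Real.cos (α + ρ) := by
    rw [hk'eq, Real.cos_add]
    simp only [x, inner_add_left, inner_sub_right, real_inner_smul_left,
      real_inner_smul_right, hkk, huu, hku, huk]
    ring
  have hcos : 0 ≤ Real.cos (α + ρ) :=
    hxk' ▸ (h ⟨Sph.mem_iff.mpr hx,
      (sdist_le_iff hk hx hρ0 (by linarith [Real.pi_pos])).mpr hkx.ge⟩).2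
  have hα : α < Real.pi := by
    refine (sdist_le_pi k k').lt_of_ne fun hπ => hne' ?_
    rw [hk'eq, show α = Real.pi from hπ, Real.cos_pi, Real.sin_pi, zero_smul, add_zero,
      neg_one_smul]
  by_contra! hlt
  exact (Real.cos_neg_of_pi_div_two_lt_of_lt hlt (by linarith)).not_ge hcos

end Width

section Cases

variable {C : Set (E d)} {k : E d}

lemma exists_supports_lthick_eq_of_isMinOn (hC : IsBody C) (hk : ‖k‖ = 1) {p : E d}
    (hp : p ∈ C) (hmin : IsMinOn (sdist k) C p) (hρ0 : 0 < sdist k p)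
    (hρ : sdist k p < Real.pi / 2) :
    ∃ k' ∈ Sph d, Supports k' C ∧ lthick k k' = Real.pi / 2 - sdist k p := by
  obtain ⟨hsub, -, hconv, -⟩ := hC
  set ρ := sdist k p
  have hp1 := Sph.mem_iff.mp (hsub hp)
  have hcos : ⟪k, p⟫ = Real.cos ρ := (cos_sdist hk hp1).symm
  have hsin : 0 < Real.sin ρ := Real.sin_pos_of_pos_of_lt_pi hρ0 (by linarith [Real.pi_pos])
  have hcos0 : 0 ≤ ⟪k, p⟫ := hcos ▸ Real.cos_nonneg_of_neg_pi_div_two_le_of_le (by linarith) hρ.le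
  have hmax : IsMaxOn (fun x => ⟪k, x⟫) C p := fun x hx => by
    change ⟪k, x⟫ ≤ ⟪k, p⟫
    rw [← cos_sdist hk (Sph.mem_iff.mp (hsub hx)), hcos]
    exact Real.cos_le_cos_of_nonneg_of_le_pi (sdist_nonneg k p) (sdist_le_pi k x) (hmin hx)
  set k' := (Real.sin ρ)⁻¹ • (Real.cos ρ • p - k)
  have hpk : ⟪p, k⟫ = Real.cos ρ := by rw [real_inner_comm, hcos]
  have hk'x : ∀ x, ⟪k', x⟫ = (Real.sin ρ)⁻¹ * (Real.cos ρ * ⟪p, x⟫ - ⟪k, x⟫) := fun x => by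
    rw [real_inner_smul_left, inner_sub_left, real_inner_smul_left]
  have hnorm : ‖Real.cos ρ • p - k‖ = Real.sin ρ := by
    rw [← sq_eq_sq₀ (norm_nonneg _) hsin.le, norm_sub_sq_real, real_inner_smul_left, norm_smul,
      hp1, hk, hpk, Real.norm_eq_abs, mul_one, sq_abs]
    linear_combination -Real.sin_sq_add_cos_sq ρ
  have hkk' : ⟪k, k'⟫ = -Real.sin ρ := by
    rw [real_inner_comm, hk'x, hpk, inner_self_eq_one_of_norm_eq_one hk]
    field_simp
    linear_combination Real.sin_sq_add_cos_sq ρ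
  refine ⟨k', Sph.mem_iff.mpr ?_, ⟨fun x hx => ⟨hsub hx, ?_⟩, p, ⟨hsub hp, ?_⟩, hp⟩, ?_⟩
  · rw [norm_smul, hnorm, norm_inv, Real.norm_of_nonneg hsin.le, inv_mul_cancel₀ hsin.ne']
  · rw [hk'x, ← hcos]
    exact mul_nonneg (inv_nonneg.mpr hsin.le) (sub_nonneg.mpr
      (inner_le_mul_inner_of_isMaxOn hsub hconv hp hmax hcos0 hx))
  · rw [hk'x, inner_self_eq_one_of_norm_eq_one hp1, hcos]
    ring
  · rw [lthick, sdist, hkk', Real.arccos_neg, ← Real.cos_pi_div_two_sub,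
      Real.arccos_cos (by linarith) (by linarith)]
    ring

lemma sdist_lt_of_mem_sInterior (hsub : C ⊆ Sph d) (hk : ‖k‖ = 1) (hCk : C ⊆ Hemi k)
    (hkC : k ∉ C) {p : E d} (hmin : IsMinOn (sdist k) C p) {x : E d}
    (hx : x ∈ sInterior C) : sdist k p < sdist k x := by
  have hxC := sInterior_subset hx
  have hx1 := Sph.mem_iff.mp (hsub hxC)
  refine (hmin hxC).lt_of_ne fun heq => ?_
  have hlt : ⟪k, x⟫ < 1 := (real_inner_le_one_of_norm_eq_one hk hx1).lt_of_ne fun h =>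
    hkC ((inner_eq_one_iff_of_norm_eq_one hk hx1).mp h ▸ hxC)
  obtain ⟨y, hy, hxy⟩ := exists_inner_gt_of_mem_sInterior hsub hk hx (hCk hxC).2 hlt
  have hyx : sdist k y < sdist k x := Real.arccos_lt_arccos
    (neg_one_le_real_inner_of_norm_eq_one hk hx1) hxy
    (real_inner_le_one_of_norm_eq_one hk (Sph.mem_iff.mp (hsub hy)))
  exact (hmin hy).not_gt (heq ▸ hyx)

lemma sSup_disjoint_sBall_sInterior_eq (hC : IsBody C) {p : E d} (hp : p ∈ C)
    (hint : ∀ x ∈ sInterior C, sdist k p < sdist k x) :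
    sSup {r : ℝ | 0 ≤ r ∧ Disjoint (sBall k r) (sInterior C)} = sdist k p := by
  refine IsGreatest.csSup_eq ⟨⟨sdist_nonneg k p, disjoint_left.mpr ?_⟩, ?_⟩
  · rintro x ⟨-, hx⟩ hxi
    exact (hx.trans_lt (hint x hxi)).false
  rintro r ⟨-, hdisj⟩
  by_contra! hlt
  obtain ⟨z, hz⟩ := hC.2.2.2
  have hclose : ∀ᶠ t in 𝓝 (0 : ℝ), sdist k (nrm ((1 - t) • p + t • z)) < r :=
    ((continuous_sdist k).continuousAt.tendsto.comp
      (tendsto_nrm_segment (Sph.mem_iff.mp (hC.1 hp)) z)).eventually (gt_mem_nhds hlt)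
  obtain ⟨t, hrt, ht⟩ :=
    ((eventually_nhdsWithin_of_eventually_nhds hclose).and
      (Ioc_mem_nhdsGT zero_lt_one)).exists
  have hti := hC.nrm_segment_mem_sInterior hp hz ht.1 ht.2
  exact disjoint_left.mp hdisj ⟨hti.1, hrt.le⟩ hti

lemma sSup_sBall_subset_eq {q : E d} (hqS : q ∈ Sph d) (hq : q ∉ sInterior C)
    (hball : sBall k (sdist k q) ⊆ C) :
    sSup {r : ℝ | 0 ≤ r ∧ sBall k r ⊆ C} = sdist k q := by
  refine IsGreatest.csSup_eq ⟨⟨sdist_nonneg k q, hball⟩, ?_⟩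
  rintro r ⟨-, hr⟩
  by_contra! hlt
  obtain ⟨ε, hε, hU⟩ := Metric.isOpen_iff.mp
    (isOpen_lt (continuous_sdist k) continuous_const) q hlt
  exact hq ⟨hqS, ε, hε, fun y ⟨hy, hyS⟩ => hr ⟨hyS, (hU hy).le⟩⟩

theorem width_eq_of_notMem (hC : IsBody C) (hk : k ∈ Sph d) (hCk : C ⊆ Hemi k) (hkC : k ∉ C) :
    width C k = Real.pi / 2 - sSup {r : ℝ | 0 ≤ r ∧ Disjoint (sBall k r) (sInterior C)} := by
  have hk1 := Sph.mem_iff.mp hk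
  obtain ⟨z, hz⟩ := hC.2.2.2
  obtain ⟨p, hp, hmin⟩ :=
    hC.isCompact.exists_isMinOn ⟨z, sInterior_subset hz⟩ (continuous_sdist k).continuousOn
  have hint := fun x => sdist_lt_of_mem_sInterior hC.1 hk1 hCk hkC hmin (x := x)
  have hρ0 : 0 < sdist k p := (sdist_nonneg k p).lt_of_ne fun h =>
    hkC (eq_of_sdist_eq_zero hk1 (Sph.mem_iff.mp (hC.1 hp)) h.symm ▸ hp)
  have hρ : sdist k p < Real.pi / 2 :=
    (hint z hz).trans_le ((mem_Hemi_iff (Sph.mem_iff.mp hz.1)).mp (hCk (sInterior_subset hz)))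
  rw [sSup_disjoint_sBall_sInterior_eq hC hp hint]
  obtain ⟨k', hk'S, hsup', hk'w⟩ := exists_supports_lthick_eq_of_isMinOn hC hk1 hp hmin hρ0 hρ
  obtain ⟨hne, hne'⟩ := ne_and_ne_neg_of_lthick_mem_Ioo hk1 (by
    rw [hk'w]
    exact ⟨by linarith, by linarith [Real.pi_pos, sdist_nonneg k p]⟩)
  refine width_eq_of_forall_le hk'S hne hne' hsup' hk'w.le fun k'' hk'' _ _ hsup'' => ?_
  exact pi_div_two_sub_sdist_le_lthick hk1 (Sph.mem_iff.mp hk'') (Sph.mem_iff.mp (hC.1 hp))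
    (hsup''.1 hp)

theorem width_eq_of_mem_diff_sInterior (hC : IsBody C) (hk : k ∈ Sph d)
    (hkC : k ∈ C \ sInterior C) : width C k = Real.pi / 2 := by
  have hk1 := Sph.mem_iff.mp hk
  obtain ⟨k', hk'S, hkb, hCk'⟩ := hC.exists_supports_of_notMem_sInterior hkC.1 hkC.2
  have hk'1 := Sph.mem_iff.mp hk'S
  have hlower : ∀ k'' ∈ Sph d, Supports k'' C → Real.pi / 2 ≤ lthick k k'' :=
    fun k'' hk'' hsup'' => by
      simpa [sdist_self hk1] using
        pi_div_two_sub_sdist_le_lthick hk1 (Sph.mem_iff.mp hk'') hk1 (hsup''.1 hkC.1)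
  have hsup' : Supports k' C := ⟨hCk', k, hkb, hkC.1⟩
  have hupper : lthick k k' ≤ Real.pi / 2 := by
    simpa [sdist_self hk1] using lthick_le_of_mem_bdHemi hk1 hk'1 hkb
  obtain ⟨hne, hne'⟩ := ne_and_ne_neg_of_lthick_mem_Ioo hk1 (by
    rw [le_antisymm hupper (hlower k' hk'S hsup')]
    exact ⟨by positivity, by linarith [Real.pi_pos]⟩)
  exact width_eq_of_forall_le hk'S hne hne' hsup' hupper fun k'' hk'' _ _ => hlower k'' hk''

theorem width_eq_of_mem_sInterior (hC : IsBody C) (hk : k ∈ Sph d) (hsup : Supports k C)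
    (hkI : k ∈ sInterior C) :
    width C k = Real.pi / 2 + sSup {r : ℝ | 0 ≤ r ∧ sBall k r ⊆ C} := by
  have ⟨hsub, hcl, hconv, _⟩ := hC
  have hk1 := Sph.mem_iff.mp hk
  obtain ⟨c, hcb, hcC⟩ := hsup.2
  have hcN : c ∈ Sph d \ sInterior C :=
    ⟨hcb.1, fun h => (sInterior_subset_openHemi hsub hk1 hsup.1 h).2.ne' hcb.2⟩
  obtain ⟨q, hqN, hmin⟩ :=
    ((isCompact_sphere (0 : E d) 1).of_isClosed_subset (isClosed_sph_diff_sInterior hsub)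
      sdiff_subset).exists_isMinOn ⟨c, hcN⟩ (continuous_sdist k).continuousOn
  set ρ := sdist k q
  have hq1 := Sph.mem_iff.mp hqN.1
  have hρ0 : 0 < ρ := (sdist_nonneg k q).lt_of_ne fun h =>
    hqN.2 (eq_of_sdist_eq_zero hk1 hq1 h.symm ▸ hkI)
  have hρle : ρ ≤ Real.pi / 2 := (hmin hcN).trans_eq (sdist_of_mem_bdHemi hcb)
  have hball : sBall k ρ ⊆ C := sBall_subset_of_forall_sdist_lt hcl hk1 hρ0 hρle
    fun y hy hlt => sInterior_subset (by_contra fun h => (hmin ⟨hy, h⟩).not_gt hlt)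
  have hρ : ρ < Real.pi / 2 := by
    refine hρle.lt_of_ne fun h => hconv.1 c hcC (hball ⟨?_, ?_⟩)
    · rw [Sph.mem_iff, norm_neg, ← Sph.mem_iff]
      exact hcb.1
    · rw [sdist_neg_right, sdist_of_mem_bdHemi hcb, h]
      linarith
  have hqC : q ∈ C := hball ⟨hqN.1, le_rfl⟩
  rw [sSup_sBall_subset_eq hqN.1 hqN.2 hball]
  obtain ⟨k', hk'S, hqb, hCk'⟩ := hC.exists_supports_of_notMem_sInterior hqC hqN.2
  have hk'1 := Sph.mem_iff.mp hk'S
  have hupper := lthick_le_of_mem_bdHemi hk1 hk'1 hqb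
  have hlower := pi_div_two_sub_sdist_le_lthick hk1 hk'1 hq1 (hCk' hqC)
  obtain ⟨hne, hne'⟩ := ne_and_ne_neg_of_lthick_mem_Ioo hk1 ⟨by linarith, by linarith⟩
  refine width_eq_of_forall_le hk'S hne hne' ⟨hCk', q, hqb, hqC⟩ hupper
    fun k'' hk'' hne'' hne''' hsup'' => ?_
  have := sdist_add_le_of_sBall_subset_Hemi hk1 (Sph.mem_iff.mp hk'') hne'' hne''' hρ0.le
    hρ.le (hball.trans hsup''.1)
  rw [lthick]
  linarith

end Cases

/-- the width of a convex body determined by a supporting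
hemisphere, in terms of the radii of concentric balls touching the body. -/
theorem stmt8 {d : ℕ} (C : Set (E d)) (hC : IsBody C)
    (k : E d) (hk : k ∈ Sph d) (hsup : Supports k C) :
    (k ∉ C → width C k =
        Real.pi / 2 - sSup {r : ℝ | 0 ≤ r ∧ Disjoint (sBall k r) (sInterior C)}) ∧
    (k ∈ C \ sInterior C → width C k = Real.pi / 2) ∧
    (k ∈ sInterior C → width C k =
        Real.pi / 2 + sSup {r : ℝ | 0 ≤ r ∧ sBall k r ⊆ C}) :=
  ⟨width_eq_of_notMem hC hk hsup.1, width_eq_of_mem_diff_sInterior hC hk,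
    width_eq_of_mem_sInterior hC hk hsup⟩
end
end

section
/- Let C ⊂ S^d be a convex body whose diameter is realized by points p, q ∈ C. Then the hemisphere K whose boundary great sphere passes through p orthogonally to the arc pq and which contains q supports C. -/
open Set Metric
open scoped RealInnerProductSpace

noncomputable section

variable {d : ℕ}

/-! A diameter `pq` makes `p` a minimum point of the linear functional `⟪q, ·⟫` on `C`. The
hemisphere in question is `{x | ⟪p, q⟫ ⟪p, x⟫ ≤ ⟪q, x⟫}`, and this inequality is the first-order
optimality condition at `p` in the direction of `x`: compare the values of `⟪q, ·⟫` at `p` and at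
the normalized points of the chord `(1 - l) p + l x`, and let `l → 0`. -/

open Filter Topology

lemma mem_Sph_iff_norm {x : E d} : x ∈ Sph d ↔ ‖x‖ = 1 := mem_sphere_zero_iff_norm

lemma abs_inner_le_one {x y : E d} (hx : x ∈ Sph d) (hy : y ∈ Sph d) : |⟪x, y⟫| ≤ 1 := by
  simpa [mem_Sph_iff_norm.mp hx, mem_Sph_iff_norm.mp hy] using abs_real_inner_le_norm x y

lemma inner_le_inner_of_sdist_le {x y u v : E d} (hx : x ∈ Sph d) (hy : y ∈ Sph d)
    (hu : u ∈ Sph d) (hv : v ∈ Sph d) (h : sdist x y ≤ sdist u v) : ⟪u, v⟫ ≤ ⟪x, y⟫ := by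
  by_contra! hlt
  have := Real.arccos_lt_arccos (abs_le.mp (abs_inner_le_one hx hy)).1 hlt
    (abs_le.mp (abs_inner_le_one hu hv)).2
  exact (h.trans_lt this).false

lemma sdist_le_sdiam {C : Set (E d)} {x y : E d} (hx : x ∈ C) (hy : y ∈ C) :
    sdist x y ≤ sdiam C :=
  le_csSup ⟨Real.pi, by rintro r ⟨u, -, v, -, rfl⟩; exact Real.arccos_le_pi _⟩ ⟨x, hx, y, hy, rfl⟩

lemma isMinOn_inner_of_sdist_eq_sdiam {C : Set (E d)} (hC : C ⊆ Sph d) {p q : E d}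
    (hp : p ∈ Sph d) (hq : q ∈ C) (hd : sdist p q = sdiam C) :
    IsMinOn (fun x => ⟪q, x⟫) C p := fun x hx => by
  show ⟪q, p⟫ ≤ ⟪q, x⟫
  rw [real_inner_comm]
  exact inner_le_inner_of_sdist_le (hC hq) (hC hx) hp (hC hq) (hd ▸ sdist_le_sdiam hq hx)

lemma inner_mul_norm_le_inner_of_mem_cone {C : Set (E d)} (hC : C ⊆ Sph d) {p q v : E d}
    (hmin : IsMinOn (fun x => ⟪q, x⟫) C p)
    (hv : v ∈ {v : E d | ∃ r : ℝ, 0 ≤ r ∧ ∃ x ∈ C, v = r • x}) :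
    ⟪q, p⟫ * ‖v‖ ≤ ⟪q, v⟫ := by
  obtain ⟨r, hr, z, hz, rfl⟩ := hv
  rw [norm_smul, mem_Sph_iff_norm.mp (hC hz), Real.norm_of_nonneg hr, real_inner_smul_right]
  have : ⟪q, p⟫ ≤ ⟪q, z⟫ := hmin hz
  nlinarith [mul_le_mul_of_nonneg_left this hr]

lemma inner_mul_inner_le_of_isMinOn {C : Set (E d)} (hC : C ⊆ Sph d) (hconv : SphConvex C)
    {p q x : E d} (hp : p ∈ C) (hx : x ∈ C) (hmin : IsMinOn (fun x => ⟪q, x⟫) C p) :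
    ⟪q, p⟫ * ⟪p, x⟫ ≤ ⟪q, x⟫ := by
  set t := ⟪q, p⟫
  set a := ⟪p, x⟫
  have ha := abs_le.mp (abs_inner_le_one (hC hp) (hC hx))
  rcases le_or_gt 0 t with ht | ht
  · nlinarith [show t ≤ ⟪q, x⟫ from hmin hx]
  have hchord : ∀ l ∈ Ioo (0 : ℝ) 1, t * (l + (1 - l) * a) ≤ ⟪q, x⟫ := by
    rintro l ⟨hl0, hl1⟩
    set w := (1 - l) • p + l • x
    have hcone : ∀ y ∈ C, y ∈ {v : E d | ∃ r : ℝ, 0 ≤ r ∧ ∃ x ∈ C, v = r • x} :=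
      fun y hy => ⟨1, zero_le_one, y, hy, (one_smul ℝ y).symm⟩
    have hw := inner_mul_norm_le_inner_of_mem_cone hC hmin
      (hconv.2 (hcone p hp) (hcone x hx) (sub_nonneg.mpr hl1.le) hl0.le (sub_add_cancel 1 l))
    have hqw : ⟪q, w⟫ = (1 - l) * t + l * ⟪q, x⟫ := by
      simp only [w, inner_add_right, real_inner_smul_right, t]
    have hw2 : ‖w‖ ^ 2 = (1 - l) ^ 2 + l ^ 2 + 2 * l * (1 - l) * a := by
      simp only [w, norm_add_sq_real, norm_smul, real_inner_smul_left, real_inner_smul_right,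
        mem_Sph_iff_norm.mp (hC hp), mem_Sph_iff_norm.mp (hC hx), Real.norm_of_nonneg hl0.le,
        Real.norm_of_nonneg (sub_nonneg.mpr hl1.le), a]
      ring
    -- `‖w‖ ≤ (‖w‖² + 1) / 2` and `t < 0` turn the cone bound into one that is linear in `a`.
    have hamgm : t * ((‖w‖ ^ 2 + 1) / 2) ≤ t * ‖w‖ := by nlinarith [sq_nonneg (‖w‖ - 1)]
    rw [hw2] at hamgm
    have : l * (t * (l + (1 - l) * a)) ≤ l * ⟪q, x⟫ := by nlinarith
    exact le_of_mul_le_mul_left this hl0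
  have hlim : Tendsto (fun l : ℝ => t * (l + (1 - l) * a)) (𝓝[>] 0) (𝓝 (t * a)) := by
    have : Continuous fun l : ℝ => t * (l + (1 - l) * a) := by fun_prop
    simpa using (this.tendsto 0).mono_left nhdsWithin_le_nhds
  exact le_of_tendsto hlim (eventually_of_mem (Ioo_mem_nhdsGT zero_lt_one) hchord)

lemma inner_nrm_sub_smul (p q y : E d) :
    ⟪nrm (q - ⟪p, q⟫ • p), y⟫ = ‖q - ⟪p, q⟫ • p‖⁻¹ * (⟪q, y⟫ - ⟪p, q⟫ * ⟪p, y⟫) := by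
  rw [nrm, real_inner_smul_left, inner_sub_left, real_inner_smul_left]

lemma mem_Hemi_nrm_sub_smul {p q y : E d} (hy : y ∈ Sph d) (h : ⟪p, q⟫ * ⟪p, y⟫ ≤ ⟪q, y⟫) :
    y ∈ Hemi (nrm (q - ⟪p, q⟫ • p)) :=
  ⟨hy, by rw [inner_nrm_sub_smul]; exact mul_nonneg (by positivity) (sub_nonneg.mpr h)⟩

lemma mem_bdHemi_nrm_sub_smul {p q : E d} (hp : p ∈ Sph d) :
    p ∈ bdHemi (nrm (q - ⟪p, q⟫ • p)) :=
  ⟨hp, by rw [inner_nrm_sub_smul, real_inner_self_eq_norm_sq, mem_Sph_iff_norm.mp hp,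
    real_inner_comm]; ring⟩

theorem stmt16_general {d : ℕ} (C : Set (E d)) (hC : IsBody C)
    (p q : E d) (hp : p ∈ C) (hq : q ∈ C)
    (hd : sdist p q = sdiam C) :
    p ∈ bdHemi (nrm (q - ⟪p, q⟫ • p)) ∧
    q ∈ Hemi (nrm (q - ⟪p, q⟫ • p)) ∧
    Supports (nrm (q - ⟪p, q⟫ • p)) C := by
  obtain ⟨hCS, -, hconv, -⟩ := hC
  have hmin := isMinOn_inner_of_sdist_eq_sdiam hCS (hCS hp) hq hd
  have hCK : C ⊆ Hemi (nrm (q - ⟪p, q⟫ • p)) := fun x hx =>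
    mem_Hemi_nrm_sub_smul (hCS hx)
      (real_inner_comm p q ▸ inner_mul_inner_le_of_isMinOn hCS hconv hp hx hmin)
  have hpK := mem_bdHemi_nrm_sub_smul (q := q) (hCS hp)
  exact ⟨hpK, hCK hq, hCK, p, hpK, hp⟩

/-- if the diameter of a convex body `C` is realized by `p, q`,
then the hemisphere whose boundary passes through `p` orthogonally to the arc
`pq` and which contains `q` supports `C`. Its center is `nrm (q - ⟪p,q⟫ p)`. -/
theorem stmt16 {d : ℕ} (C : Set (E d)) (hC : IsBody C)
    (p q : E d) (hp : p ∈ C) (hq : q ∈ C) (hne : p ≠ q)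
    (hd : sdist p q = sdiam C) :
    p ∈ bdHemi (nrm (q - ⟪p, q⟫ • p)) ∧
    q ∈ Hemi (nrm (q - ⟪p, q⟫ • p)) ∧
    Supports (nrm (q - ⟪p, q⟫ • p)) C :=
  stmt16_general C hC p q hp hq hd
end
end
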